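/- arXiv:2210.09344 — 5 statements merged into one kernel-verified Lean document; each statement's English description precedes it below -/
import Mathlib

section
/- Let R be a commutative Noetherian ring, A a projective Noetherian R-algebra, and let M, T be finitely generated A-modules projective over R, with N in add T. An A-homomorphism f : M → N is a left (add T)-approximation of M if and only if the R-dual map Df : DN → DM is a right (add DT)-approximation of DM over the opposite algebra A^op. -/
universe u
open Function TensorProduct

namespace RelDom

section


variable (R : Type u) [CommRing R] (A : Type u) [Ring A] [Algebra R A]

/-- `M` is a direct summand of a finite direct sum of copies of `T`, i.e. `M ∈ add T`. -/
def InAdd (T : Type u) [AddCommGroup T] [Module A T]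
    (M : Type u) [AddCommGroup M] [Module A M] : Prop :=
  ∃ (n : ℕ) (i : M →ₗ[A] (Fin n → T)) (p : (Fin n → T) →ₗ[A] M), ∀ m, p (i m) = m

/-- `f` is an `(A,R)`-monomorphism : an injective `A`-linear map admitting an
`R`-linear retraction (the `R`-action being the one through `algebraMap R A`). -/
def RSplitMono {M N : Type u} [AddCommGroup M] [Module A M]
    [AddCommGroup N] [Module A N] (f : M →ₗ[A] N) : Prop :=
  Injective f ∧ ∃ r : N →+ M,
    (∀ (s : R) (x : N), r (algebraMap R A s • x) = algebraMap R A s • r x) ∧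
    ∀ m, r (f m) = m

/-- `f` is an `(A,R)`-epimorphism : a surjective `A`-linear map admitting an
`R`-linear section. -/
def RSplitEpi {M N : Type u} [AddCommGroup M] [Module A M]
    [AddCommGroup N] [Module A N] (f : M →ₗ[A] N) : Prop :=
  Surjective f ∧ ∃ s : N →+ M,
    (∀ (c : R) (x : N), s (algebraMap R A c • x) = algebraMap R A c • s x) ∧
    ∀ x, f (s x) = x

/-- A submodule `p ≤ N` is an `R`-direct summand of `N`. -/
def RSummand {N : Type u} [AddCommGroup N] [Module A N] (p : Submodule A N) : Prop :=
  ∃ r : N →+ p, (∀ (c : R) (x : N), r (algebraMap R A c • x) = algebraMap R A c • r x) ∧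
    ∀ x : p, r x = x

/-- `Q`-relative dominant dimension of `M` is at least `n`:
there is an `(A,R)`-exact sequence `0 → M → T₁ → ⋯ → Tₙ` with all `Tᵢ ∈ add Q`
which stays exact under `Hom_A(-, Q)`. -/
def DomdimGE (Q : Type u) [AddCommGroup Q] [Module A Q] :
    ℕ → ModuleCat.{u} A → Prop
  | 0, _ => True
  | n + 1, M =>
      ∃ (T : ModuleCat.{u} A) (_ : InAdd A Q T) (f : M →ₗ[A] T),
        RSplitMono R A f ∧
        (∀ g : (M : Type u) →ₗ[A] Q, ∃ h : (T : Type u) →ₗ[A] Q, ∀ m, h (f m) = g m) ∧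
        DomdimGE Q n (ModuleCat.of A ((T : Type u) ⧸ LinearMap.range f))

/-- `Q`-relative codominant dimension of `M` is at least `n`. -/
def CodomdimGE (Q : Type u) [AddCommGroup Q] [Module A Q] :
    ℕ → ModuleCat.{u} A → Prop
  | 0, _ => True
  | n + 1, M =>
      ∃ (T : ModuleCat.{u} A) (_ : InAdd A Q T) (f : T →ₗ[A] M),
        RSplitEpi R A f ∧
        (∀ g : Q →ₗ[A] (M : Type u), ∃ h : Q →ₗ[A] (T : Type u), ∀ q, f (h q) = g q) ∧
        CodomdimGE Q n (ModuleCat.of A (LinearMap.ker f))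

/-- The relative dominant dimension of `M` with respect to `Q`, as a value in `ℕ∞`. -/
noncomputable def Domdim (Q : Type u) [AddCommGroup Q] [Module A Q]
    (M : ModuleCat.{u} A) : ℕ∞ :=
  ⨆ (n : ℕ) (_ : DomdimGE R A Q n M), (n : ℕ∞)

/-- The relative codominant dimension of `M` with respect to `Q`, as a value in `ℕ∞`. -/
noncomputable def Codomdim (Q : Type u) [AddCommGroup Q] [Module A Q]
    (M : ModuleCat.{u} A) : ℕ∞ :=
  ⨆ (n : ℕ) (_ : CodomdimGE R A Q n M), (n : ℕ∞)


end

section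


variable (R : Type u) [CommRing R] (A : Type u) [Ring A] [Algebra R A]

section Dual

variable (S : Type u) [Ring S]
variable (M : Type u) [AddCommGroup M] [Module R M] [Module S M] [SMulCommClass S R M]

/-- scalar action of `a : S` as an `R`-linear endomorphism. -/
def smulEnd (a : S) : M →ₗ[R] M where
  toFun m := a • m
  map_add' := smul_add a
  map_smul' r m := smul_comm a r m

/-- The standard duality `D = Hom_R(-, R)` turns a left `S`-module into a right
`S`-module, i.e. a module over `Sᵐᵒᵖ`. -/
instance dualModule : Module Sᵐᵒᵖ (M →ₗ[R] R) where
  smul a f := f ∘ₗ smulEnd R S M a.unop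
  one_smul f := LinearMap.ext fun m => by
    show f ((1 : Sᵐᵒᵖ).unop • m) = f m
    simp
  mul_smul a b f := LinearMap.ext fun m => by
    show f ((a * b).unop • m) = f (b.unop • a.unop • m)
    rw [MulOpposite.unop_mul, mul_smul]
  smul_zero a := LinearMap.ext fun m => rfl
  smul_add a f g := LinearMap.ext fun m => rfl
  add_smul a b f := LinearMap.ext fun m => by
    show f ((a + b).unop • m) = f (a.unop • m) + f (b.unop • m)
    rw [MulOpposite.unop_add, add_smul, map_add]
  zero_smul f := LinearMap.ext fun m => by
    show f ((0 : Sᵐᵒᵖ).unop • m) = 0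
    rw [MulOpposite.unop_zero, zero_smul, map_zero]

lemma dual_smul_apply (a : Sᵐᵒᵖ) (f : M →ₗ[R] R) (m : M) :
    (a • f) m = f (a.unop • m) := rfl

end Dual

section Coind

/-- The left `A`-module structure on `Hom_R(A, R)`, the dual of the *right*
regular module: `(a • f) x = f (x * a)`. -/
instance coindModule : Module A (A →ₗ[R] R) where
  smul a f := f ∘ₗ
    { toFun := fun x => x * a
      map_add' := fun x y => add_mul x y a
      map_smul' := fun r x => smul_mul_assoc r x a }
  one_smul f := LinearMap.ext fun x => by
    show f (x * 1) = f x
    rw [mul_one]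
  mul_smul a b f := LinearMap.ext fun x => by
    show f (x * (a * b)) = f ((x * a) * b)
    rw [mul_assoc]
  smul_zero a := LinearMap.ext fun x => rfl
  smul_add a f g := LinearMap.ext fun x => rfl
  add_smul a b f := LinearMap.ext fun x => by
    show f (x * (a + b)) = f (x * a) + f (x * b)
    rw [mul_add, map_add]
  zero_smul f := LinearMap.ext fun x => by
    show f (x * 0) = 0
    rw [mul_zero, map_zero]

lemma coind_smul_apply (a : A) (f : A →ₗ[R] R) (x : A) :
    (a • f) x = f (x * a) := rfl

end Coind

section TensorOver

variable (X : Type u) [AddCommGroup X] [Module R X] [Module Aᵐᵒᵖ X]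
variable (Y : Type u) [AddCommGroup Y] [Module R Y] [Module A Y]

/-- The balancing relations for the tensor product over the (possibly
noncommutative) `R`-algebra `A`. -/
def balanceRel : Set (X ⊗[R] Y) :=
  {z | ∃ (x : X) (a : A) (y : Y),
    z = (MulOpposite.op a • x) ⊗ₜ[R] y - x ⊗ₜ[R] (a • y)}

/-- The tensor product `X ⊗_A Y` of a right `A`-module `X` and a left `A`-module `Y`
over the `R`-algebra `A`, realized as a quotient of `X ⊗[R] Y`. -/
abbrev TensorOver : Type u :=
  (X ⊗[R] Y) ⧸ Submodule.span R (balanceRel R A X Y)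

end TensorOver


end

end RelDom

open RelDom Function TensorProduct


section Stmt2

variable (R : Type u) [CommRing R] [IsNoetherianRing R]
variable (A : Type u) [Ring A] [Algebra R A] [Module.Finite R A] [Module.Projective R A]
variable (M N T : Type u)
  [AddCommGroup M] [Module R M] [Module A M] [IsScalarTower R A M] [SMulCommClass A R M]
  [AddCommGroup N] [Module R N] [Module A N] [IsScalarTower R A N] [SMulCommClass A R N]
  [AddCommGroup T] [Module R T] [Module A T] [IsScalarTower R A T] [SMulCommClass A R T]

/-- The `R`-dual (transpose) `Df : DN → DM` of an `A`-linear map `f : M → N`,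
as a map of right `A`-modules (= `Aᵐᵒᵖ`-modules). -/
noncomputable def dualTransposed (f : M →ₗ[A] N) :
    (N →ₗ[R] R) →ₗ[Aᵐᵒᵖ] (M →ₗ[R] R) where
  toFun φ := φ ∘ₗ (f.restrictScalars R)
  map_add' φ ψ := rfl
  map_smul' a φ := LinearMap.ext fun m =>
    (congrArg φ (map_smul f a.unop m)).symm


section DualityAux

variable {R A : Type u} [CommRing R] [Ring A] [Algebra R A]

/-- `R`-duals separate points of an `R`-f.g. projective module. -/
lemma dual_sep {T : Type u} [AddCommGroup T] [Module R T]
    [Module.Finite R T] [Module.Projective R T]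
    {x : T} (h : ∀ φ : T →ₗ[R] R, φ x = 0) : x = 0 := by
  obtain ⟨k, β, hβ⟩ := Module.Finite.exists_fin' R T
  obtain ⟨α, hα⟩ := Module.projective_lifting_property β LinearMap.id hβ
  have hx : α x = 0 := funext fun j => h ((LinearMap.proj j).comp α)
  have : β (α x) = x := LinearMap.congr_fun hα x
  rw [hx, map_zero] at this
  exact this.symm

lemma dual_op_algebraMap_smul {T : Type u} [AddCommGroup T] [Module R T] [Module A T]
    [IsScalarTower R A T] [SMulCommClass A R T] (r : R) (φ : T →ₗ[R] R) :
    (MulOpposite.op (algebraMap R A r)) • φ = r • φ := by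
  ext t
  show φ (algebraMap R A r • t) = r • φ t
  rw [algebraMap_smul]
  exact map_smul φ r t

/-- From an `Aᵐᵒᵖ`-linear map `DT → DM₀` produce an `A`-linear map `M₀ → T`
(for `T` f.g. projective over `R`): this is `D`-reflexivity of `T`. -/
lemma exists_fromDual {T M₀ : Type u}
    [AddCommGroup T] [Module R T] [Module A T] [IsScalarTower R A T] [SMulCommClass A R T]
    [AddCommGroup M₀] [Module R M₀] [Module A M₀] [IsScalarTower R A M₀]
    [SMulCommClass A R M₀] [Module.Finite R T] [Module.Projective R T]
    (ξ : (T →ₗ[R] R) →ₗ[Aᵐᵒᵖ] (M₀ →ₗ[R] R)) :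
    ∃ g : M₀ →ₗ[A] T, ∀ (φ : T →ₗ[R] R) (m : M₀), φ (g m) = ξ φ m := by
  obtain ⟨k, β, hβ⟩ := Module.Finite.exists_fin' R T
  obtain ⟨α, hα⟩ := Module.projective_lifting_property β LinearMap.id hβ
  have hβα : ∀ t, β (α t) = t := fun t => LinearMap.congr_fun hα t
  set αj : Fin k → (T →ₗ[R] R) := fun j => (LinearMap.proj j).comp α with hαj
  set g₀ : M₀ →ₗ[R] T := β ∘ₗ (LinearMap.pi fun j => ξ (αj j)) with hg₀
  -- twisted `R`-linearity of `ξ`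
  have hξR : ∀ (r : R) (φ : T →ₗ[R] R), ξ (r • φ) = r • ξ φ := by
    intro r φ
    rw [← dual_op_algebraMap_smul (A := A) r φ, map_smul,
      dual_op_algebraMap_smul (A := A) r (ξ φ)]
  -- step A
  have stepA : ∀ (φ : T →ₗ[R] R) (w : Fin k → R),
      φ (β w) = ∑ j, φ (β (Pi.single j 1)) * w j := by
    intro φ w
    conv_lhs => rw [← Finset.univ_sum_single w]
    rw [map_sum, map_sum]
    refine Finset.sum_congr rfl fun j _ => ?_
    have : Pi.single j (w j) = w j • (Pi.single j (1 : R) : Fin k → R) := by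
      funext x
      simp [Pi.single_apply, mul_ite]
    rw [this, map_smul, map_smul, smul_eq_mul, mul_comm]
  -- step B
  have stepB : ∀ φ : T →ₗ[R] R,
      (∑ j, φ (β (Pi.single j 1)) • αj j) = φ := by
    intro φ
    ext t
    rw [LinearMap.sum_apply]
    have : ∀ j ∈ Finset.univ, (φ (β (Pi.single j 1)) • αj j) t
        = φ (β (Pi.single j 1)) * (α t) j := fun j _ => rfl
    rw [Finset.sum_congr rfl this, ← stepA φ (α t), hβα]
  -- key identity
  have key : ∀ (φ : T →ₗ[R] R) (m : M₀), φ (g₀ m) = ξ φ m := by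
    intro φ m
    have h1 : φ (g₀ m) = ∑ j, φ (β (Pi.single j 1)) * ξ (αj j) m :=
      stepA φ (fun j => ξ (αj j) m)
    have h2 : ∀ j ∈ Finset.univ, φ (β (Pi.single j 1)) * ξ (αj j) m
        = ξ (φ (β (Pi.single j 1)) • αj j) m := by
      intro j _
      rw [hξR]
      rfl
    rw [h1, Finset.sum_congr rfl h2]
    have h3 : (∑ j, ξ (φ (β (Pi.single j 1)) • αj j)) m = ξ φ m := by
      rw [← map_sum, stepB]
    rw [← h3, LinearMap.sum_apply]
  -- A-linearity via separation
  refine ⟨{ toFun := g₀, map_add' := map_add g₀, map_smul' := ?_ }, key⟩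
  intro a m
  have hsep : ∀ φ : T →ₗ[R] R, φ (g₀ (a • m) - a • g₀ m) = 0 := by
    intro φ
    rw [map_sub, sub_eq_zero]
    calc φ (g₀ (a • m)) = ξ φ (a • m) := key φ _
      _ = (MulOpposite.op a • ξ φ) m := rfl
      _ = ξ (MulOpposite.op a • φ) m := by rw [map_smul]
      _ = (MulOpposite.op a • φ) (g₀ m) := (key _ m).symm
      _ = φ (a • g₀ m) := rfl
  have := dual_sep hsep
  rw [sub_eq_zero] at this
  exact this

end DualityAux

/-- Core duality statement for the single module `T`. -/
lemma core_iff [Module.Finite A M] [Module.Finite A T]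
    [Module.Projective R M] [Module.Projective R T] (f : M →ₗ[A] N) :
    Surjective (fun h : N →ₗ[A] T => h ∘ₗ f) ↔
    Surjective (fun ψ : (T →ₗ[R] R) →ₗ[Aᵐᵒᵖ] (N →ₗ[R] R) =>
      dualTransposed R A M N f ∘ₗ ψ) := by
  have : Module.Finite R T := Module.Finite.trans A T
  constructor
  · intro hL ξ
    obtain ⟨g, hg⟩ := exists_fromDual (T := T) (M₀ := M) ξ
    obtain ⟨h, hh⟩ := hL g
    refine ⟨dualTransposed R A N T h, ?_⟩
    ext φ m
    show φ (h (f m)) = ξ φ m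
    rw [show h (f m) = g m from LinearMap.congr_fun hh m, hg]
  · intro hR g
    obtain ⟨ψ, hψ⟩ := hR (dualTransposed R A M T g)
    obtain ⟨h, hh⟩ := exists_fromDual (T := T) (M₀ := N) ψ
    refine ⟨h, ?_⟩
    ext m
    have hsep : ∀ φ : T →ₗ[R] R, φ (h (f m) - g m) = 0 := by
      intro φ
      rw [map_sub, sub_eq_zero, hh]
      have := LinearMap.congr_fun (LinearMap.congr_fun hψ φ) m
      exact this
    have := dual_sep hsep
    rwa [sub_eq_zero] at this

/-- For `M, T` finitely generated `A`-modules projective over `R`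
and `N ∈ add T`, an `A`-homomorphism `f : M → N` is a left `add T`-approximation of
`M` iff its dual `Df : DN → DM` is a right `add (DT)`-approximation of `DM`
over `Aᵐᵒᵖ`. -/
theorem stmt_2 [Module.Finite A M] [Module.Finite A T]
    [Module.Projective R M] [Module.Projective R T]
    (hN : InAdd A T N) (f : M →ₗ[A] N) :
    (∀ (X : Type u) [AddCommGroup X] [Module A X], InAdd A T X →
        Surjective (fun h : N →ₗ[A] X => h ∘ₗ f)) ↔
      (∀ (Y : Type u) [AddCommGroup Y] [Module Aᵐᵒᵖ Y], InAdd Aᵐᵒᵖ (T →ₗ[R] R) Y →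
        Surjective (fun g : Y →ₗ[Aᵐᵒᵖ] (N →ₗ[R] R) =>
          (dualTransposed R A M N f) ∘ₗ g)) := by
  classical
  have hTT : InAdd A T T :=
    ⟨1, LinearMap.pi fun _ => LinearMap.id, LinearMap.proj 0, fun m => rfl⟩
  have hDTT : InAdd Aᵐᵒᵖ (T →ₗ[R] R) (T →ₗ[R] R) :=
    ⟨1, LinearMap.pi fun _ => LinearMap.id, LinearMap.proj 0, fun m => rfl⟩
  constructor
  · intro hL Y _ _ hY
    obtain ⟨n, i, p, hp⟩ := hY
    have hR' := (core_iff R A M N T f).mp (hL T hTT)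
    intro φ
    choose ψ hψ using fun j : Fin n =>
      hR' (φ ∘ₗ p ∘ₗ LinearMap.single Aᵐᵒᵖ (fun _ : Fin n => T →ₗ[R] R) j)
    refine ⟨(∑ j, ψ j ∘ₗ LinearMap.proj j) ∘ₗ i, ?_⟩
    apply LinearMap.ext
    intro y
    show dualTransposed R A M N f ((∑ j, ψ j ∘ₗ LinearMap.proj j) (i y)) = φ y
    rw [LinearMap.sum_apply, map_sum]
    have h1 : ∀ j ∈ Finset.univ,
        dualTransposed R A M N f ((ψ j ∘ₗ LinearMap.proj j) (i y))
        = φ (p (Pi.single j (i y j))) := by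
      intro j _
      exact LinearMap.congr_fun (hψ j) (i y j)
    rw [Finset.sum_congr rfl h1, ← map_sum, ← map_sum, Finset.univ_sum_single (i y), hp]
  · intro hRall X _ _ hX
    obtain ⟨n, i, p, hp⟩ := hX
    have hL' := (core_iff R A M N T f).mpr (hRall (T →ₗ[R] R) hDTT)
    intro g
    choose h hh using fun j : Fin n => hL' ((LinearMap.proj j) ∘ₗ i ∘ₗ g)
    refine ⟨p ∘ₗ LinearMap.pi h, ?_⟩
    apply LinearMap.ext
    intro m
    show p (fun j => h j (f m)) = g m
    have : (fun j => h j (f m)) = i (g m) := by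
      funext j
      exact LinearMap.congr_fun (hh j) m
    rw [this, hp]

end Stmt2
end

section
/- Let R be a commutative Noetherian ring, A a projective Noetherian R-algebra, Q a finitely generated A-module projective over R with DQ ⊗_A Q projective over R, and B = End_A(Q)^op. For a finitely generated A-module M projective over R: the counit χ_M : Q ⊗_B Hom_A(Q, M) → M (given by q ⊗ g ↦ g(q)) is surjective if and only if there exists an (A,R)-monomorphism DM → X with X in add DQ that remains exact under Hom_{A^op}(−, DQ), i.e., if and only if DQ-domdim_{(A,R)} DM ≥ 1. -/
universe u
open Function TensorProduct

namespace RelDom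

section


variable (R : Type u) [CommRing R] (A : Type u) [Ring A] [Algebra R A]

section Counit

variable (Q : Type u) [AddCommGroup Q] [Module R Q] [Module A Q]
variable (M : Type u) [AddCommGroup M] [Module R M] [Module A M]
variable [SMulCommClass A R M] [SMulCommClass R A Q] [IsScalarTower R A Q] [IsScalarTower R A M]
variable [SMulCommClass R A M]

/-- `Hom_A(Q, M)` is a right module over `E := End_A(Q)`, i.e. a left module over
`Eᵐᵒᵖ = End_A(Q)ᵐᵒᵖ`, by precomposition.  Note that `End_A(Q)ᵐᵒᵖ` is exactly the
algebra `B = End_A(Q)ᵒᵖ` and `Hom_A(Q,M)` is the usual left `B`-module `F_Q M`. -/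
instance homEndModule : Module (Module.End A Q)ᵐᵒᵖ (Q →ₗ[A] M) where
  smul b g := g ∘ₗ b.unop
  one_smul g := LinearMap.ext fun q => rfl
  mul_smul a b g := LinearMap.ext fun q => rfl
  smul_zero b := LinearMap.ext fun q => rfl
  smul_add b f g := LinearMap.ext fun q => rfl
  add_smul a b g := LinearMap.ext fun q => by
    show g ((a + b).unop q) = g (a.unop q) + g (b.unop q)
    rw [MulOpposite.unop_add, LinearMap.add_apply, map_add]
  zero_smul g := LinearMap.ext fun q => by
    show g ((0 : (Module.End A Q)ᵐᵒᵖ).unop q) = 0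
    rw [MulOpposite.unop_zero, LinearMap.zero_apply, map_zero]

lemma homEnd_smul_apply (b : (Module.End A Q)ᵐᵒᵖ) (g : Q →ₗ[A] M) (q : Q) :
    (b • g) q = g (b.unop q) := rfl

/-- The balancing relations for `Q ⊗_B Hom_A(Q, M)`, where `B = End_A(Q)ᵒᵖ`. -/
def counitRel : Set (Q ⊗[R] (Q →ₗ[A] M)) :=
  {z | ∃ (q : Q) (b : Module.End A Q) (g : Q →ₗ[A] M),
    z = (b q) ⊗ₜ[R] g - q ⊗ₜ[R] (g ∘ₗ b)}

/-- `Q ⊗_B Hom_A(Q, M)`, where `B = End_A(Q)ᵒᵖ`, as a left `A`-module. -/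
abbrev CounitDom : Type u :=
  (Q ⊗[R] (Q →ₗ[A] M)) ⧸ Submodule.span A (counitRel R A Q M)

/-- evaluation, `A`-linearly in the first variable -/
noncomputable def evalHom : Q →ₗ[A] ((Q →ₗ[A] M) →ₗ[R] M) where
  toFun q :=
    { toFun := fun g => g q
      map_add' := fun g h => rfl
      map_smul' := fun r g => rfl }
  map_add' q q' := LinearMap.ext fun g => g.map_add q q'
  map_smul' a q := LinearMap.ext fun g => g.map_smul a q

noncomputable def counitAux : (Q ⊗[R] (Q →ₗ[A] M)) →ₗ[A] M :=
  TensorProduct.AlgebraTensorModule.lift (evalHom R A Q M)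

/-- The counit `χ_M : Q ⊗_B Hom_A(Q, M) → M`, `q ⊗ g ↦ g q`. -/
noncomputable def counit : CounitDom R A Q M →ₗ[A] M :=
  Submodule.liftQ _ (counitAux R A Q M) (by
    rw [Submodule.span_le]
    rintro z ⟨q, b, g, rfl⟩
    simp [counitAux, evalHom, SetLike.mem_coe, LinearMap.mem_ker])

end Counit

section Tor

variable (S : Type u) [Ring S]
variable (X : Type u) [AddCommGroup X] [Module Sᵐᵒᵖ X]

/-- The map obtained from an `S`-linear map between finite free left `S`-modules
by tensoring with the right `S`-module `X` (under `X ⊗_S S^m ≅ X^m`). -/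
noncomputable def piMap {m n : ℕ} (d : (Fin m → S) →ₗ[S] (Fin n → S)) (v : Fin m → X) :
    Fin n → X :=
  fun i => ∑ j, MulOpposite.op (d (Pi.single j 1) i) • v j

variable (Y : Type u) [AddCommGroup Y] [Module S Y]

/-- `Tor_i^S(X, Y) = 0` for all `1 ≤ i ≤ q`, expressed via a resolution of `Y` by
finite free left `S`-modules, tensored over `S` with the right `S`-module `X`. -/
noncomputable def TorVanishUpTo (q : ℕ) : Prop :=
  ∃ (k : ℕ → ℕ) (d : ∀ n, (Fin (k (n+1)) → S) →ₗ[S] (Fin (k n) → S))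
    (ε : (Fin (k 0) → S) →ₗ[S] Y),
    Surjective ε ∧ LinearMap.ker ε = LinearMap.range (d 0) ∧
    (∀ n, LinearMap.ker (d n) = LinearMap.range (d (n+1))) ∧
    ∀ i, i + 1 ≤ q → ∀ v : Fin (k (i+1)) → X, piMap S X (d i) v = 0 →
      ∃ w : Fin (k (i+2)) → X, piMap S X (d (i+1)) w = v

end Tor

section Ext

open CategoryTheory

/-- Vanishing of `Ext_A^i(X, Y)`. -/
def ExtVanish (X Y : ModuleCat.{u} A) (i : ℕ) : Prop :=
  Subsingleton ((((_root_.Ext ℤ (ModuleCat.{u} A) i).obj (Opposite.op X)).obj Y : Type u))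

end Ext

section InjDim

/-- `M` admits a finite injective coresolution of length `≤ d`, i.e. the injective
dimension of `M` is at most `d`. -/
def InjCoresLE : ℕ → ModuleCat.{u} A → Prop
  | 0, M => Module.Injective A M
  | d + 1, M => ∃ (I : ModuleCat.{u} A) (f : M →ₗ[A] I),
      Module.Injective A I ∧ Injective f ∧
      InjCoresLE d (ModuleCat.of A ((I : Type u) ⧸ LinearMap.range f))

end InjDim


end

end RelDom

open RelDom Function TensorProduct

section Stmt3

variable (R : Type u) [CommRing R] [IsNoetherianRing R]
variable (A : Type u) [Ring A] [Algebra R A] [Module.Finite R A] [Module.Projective R A]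
variable (Q : Type u) [AddCommGroup Q] [Module R Q] [Module A Q]
  [IsScalarTower R A Q] [SMulCommClass A R Q] [SMulCommClass R A Q]
  [Module.Finite A Q] [Module.Projective R Q]
variable (M : Type u) [AddCommGroup M] [Module R M] [Module A M]
  [IsScalarTower R A M] [SMulCommClass A R M] [SMulCommClass R A M]
  [Module.Finite A M] [Module.Projective R M]


namespace Stmt3Aux

open MulOpposite

/-- On the dual of an `(R,A)`-module, the action of `algebraMap R Aᵐᵒᵖ c` agrees with
the pointwise `R`-action. -/
lemma algOp_smul_dual (X : Type u) [AddCommGroup X] [Module R X] [Module A X]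
    [IsScalarTower R A X] [SMulCommClass A R X] (c : R) (ψ : X →ₗ[R] R) :
    (algebraMap R Aᵐᵒᵖ c) • ψ = c • ψ := by
  ext x
  show ψ ((algebraMap R A c) • x) = c • ψ x
  rw [algebraMap_smul, map_smul]

lemma dual_inj [Module.IsReflexive R M] {x y : M}
    (h : ∀ ψ : M →ₗ[R] R, ψ x = ψ y) : x = y := by
  apply (Module.bijective_dual_eval R M).injective
  ext ψ
  simpa using h ψ

/-- The `A`-linear map `Q → M` obtained by "dualizing" an `Aᵐᵒᵖ`-linear map
`DM → DQ`, using reflexivity of `M`. -/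
noncomputable def hatFun [Module.IsReflexive R M]
    (g : (M →ₗ[R] R) →ₗ[Aᵐᵒᵖ] (Q →ₗ[R] R)) (q : Q) : M :=
  (Module.evalEquiv R M).symm
    { toFun := fun ψ => g ψ q
      map_add' := fun ψ χ => by
        show g (ψ + χ) q = g ψ q + g χ q
        rw [map_add]; rfl
      map_smul' := fun c ψ => by
        show g (c • ψ) q = (RingHom.id R) c • g ψ q
        rw [RingHom.id_apply, ← algOp_smul_dual R A M c ψ, map_smul,
          algOp_smul_dual R A Q c (g ψ)]
        rfl }

lemma hatFun_spec [Module.IsReflexive R M]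
    (g : (M →ₗ[R] R) →ₗ[Aᵐᵒᵖ] (Q →ₗ[R] R)) (q : Q) (ψ : M →ₗ[R] R) :
    ψ (hatFun R A Q M g q) = g ψ q := by
  rw [hatFun, Module.apply_evalEquiv_symm_apply]
  rfl

noncomputable def hat [Module.IsReflexive R M]
    (g : (M →ₗ[R] R) →ₗ[Aᵐᵒᵖ] (Q →ₗ[R] R)) : Q →ₗ[A] M where
  toFun := hatFun R A Q M g
  map_add' q q' := by
    apply dual_inj R M
    intro ψ
    rw [hatFun_spec, map_add ψ, hatFun_spec, hatFun_spec, map_add (g ψ)]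
  map_smul' a q := by
    apply dual_inj R M
    intro ψ
    rw [RingHom.id_apply, hatFun_spec]
    have h1 : ψ (a • hatFun R A Q M g q) = (op a • ψ) (hatFun R A Q M g q) := rfl
    rw [h1, hatFun_spec, g.map_smul (op a) ψ]
    rfl

lemma hat_spec [Module.IsReflexive R M]
    (g : (M →ₗ[R] R) →ₗ[Aᵐᵒᵖ] (Q →ₗ[R] R)) (q : Q) (ψ : M →ₗ[R] R) :
    ψ (hat R A Q M g q) = g ψ q :=
  hatFun_spec R A Q M g q ψ

lemma counit_mk (x : Q ⊗[R] (Q →ₗ[A] M)) :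
    counit R A Q M (Submodule.Quotient.mk x) = counitAux R A Q M x := rfl

lemma counitAux_tmul (q : Q) (g : Q →ₗ[A] M) :
    counitAux R A Q M (q ⊗ₜ[R] g) = g q := by
  rw [counitAux, TensorProduct.AlgebraTensorModule.lift_tmul]
  rfl

end Stmt3Aux

/-- The counit `χ_M : Q ⊗_B Hom_A(Q, M) → M` is surjective iff
`DQ-domdim_{(A,R)} DM ≥ 1`, i.e. iff there is an `(A,R)`-monomorphism `DM → X`
with `X ∈ add DQ` remaining exact under `Hom_{Aᵒᵖ}(-, DQ)`. -/
theorem stmt_3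
    (hQQ : Module.Projective R (TensorOver R A (Q →ₗ[R] R) Q)) :
    Surjective (counit R A Q M) ↔
      DomdimGE R Aᵐᵒᵖ (Q →ₗ[R] R) 1 (ModuleCat.of Aᵐᵒᵖ (M →ₗ[R] R)) := by
  classical
  haveI : Module.Finite R Q := Module.Finite.trans A Q
  haveI : Module.Finite R M := Module.Finite.trans A M
  constructor
  · -- Forward direction
    intro hsurj
    -- `Hom_A(Q, M)` is a finite `R`-module
    obtain ⟨k, qgen, hqgen⟩ := Module.Finite.exists_fin (R := R) (M := Q)
    let θ : (Q →ₗ[A] M) →ₗ[R] (Fin k → M) :=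
      { toFun := fun g => fun i => g (qgen i)
        map_add' := fun g g' => rfl
        map_smul' := fun c g => rfl }
    have hθ : Function.Injective θ := by
      intro g g' h
      have hgen : ∀ i, g (qgen i) = g' (qgen i) := fun i => congrFun h i
      ext q
      have hq : q ∈ Submodule.span R (Set.range qgen) := by
        rw [hqgen]; exact Submodule.mem_top
      induction hq using Submodule.span_induction with
      | mem x hx => obtain ⟨i, rfl⟩ := hx; exact hgen i
      | zero => simp
      | add x y _ _ hx hy => rw [map_add, map_add, hx, hy]
      | smul c x _ hx => rw [← algebraMap_smul A c x, map_smul, map_smul, hx]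
    haveI : IsNoetherian R (Q →ₗ[A] M) := isNoetherian_of_injective θ hθ
    obtain ⟨n, gf, hgf⟩ := Module.Finite.exists_fin (R := R) (M := Q →ₗ[A] M)
    -- the approximation `p : Q^n → M`
    let p : (Fin n → Q) →ₗ[A] M := ∑ j, (gf j).comp (LinearMap.proj j)
    have hpapp : ∀ φ : Fin n → Q, p φ = ∑ j, gf j (φ j) := by
      intro φ
      simp [p, LinearMap.sum_apply]
    have hmem : ∀ (g : Q →ₗ[A] M) (q : Q), g q ∈ LinearMap.range p := by
      intro g q
      have hg : g ∈ Submodule.span R (Set.range gf) := by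
        rw [hgf]; exact Submodule.mem_top
      obtain ⟨c, hc⟩ := (Submodule.mem_span_range_iff_exists_fun R).mp hg
      refine ⟨fun j => c j • q, ?_⟩
      rw [hpapp]
      calc ∑ j, gf j (c j • q) = ∑ j, c j • gf j q := by
            refine Finset.sum_congr rfl fun j _ => ?_
            rw [← algebraMap_smul A (c j) q, map_smul, algebraMap_smul]
        _ = (∑ j, c j • gf j) q := by
            rw [LinearMap.sum_apply]
            exact Finset.sum_congr rfl fun j _ => rfl
        _ = g q := by rw [hc]
    have hrange : ∀ x : Q ⊗[R] (Q →ₗ[A] M), counitAux R A Q M x ∈ LinearMap.range p := by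
      intro x
      induction x using TensorProduct.induction_on with
      | zero => simp
      | tmul q g => rw [Stmt3Aux.counitAux_tmul]; exact hmem g q
      | add x y hx hy => rw [map_add]; exact Submodule.add_mem _ hx hy
    have hp : Function.Surjective p := by
      intro m
      obtain ⟨z, hz⟩ := hsurj m
      obtain ⟨x, rfl⟩ := Submodule.Quotient.mk_surjective _ z
      rw [Stmt3Aux.counit_mk] at hz
      obtain ⟨φ, hφ⟩ := hrange x
      exact ⟨φ, by rw [hφ, hz]⟩
    -- `R`-linear section of `p`
    obtain ⟨sec, hsec⟩ := Module.projective_lifting_property (R := R)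
      (p.restrictScalars R) LinearMap.id hp
    have hsec' : ∀ m, p (sec m) = m := fun m => LinearMap.ext_iff.mp hsec m
    -- the dual embedding
    let F : (M →ₗ[R] R) →ₗ[Aᵐᵒᵖ] (Fin n → (Q →ₗ[R] R)) :=
      { toFun := fun ψ => fun j => ψ ∘ₗ ((gf j).restrictScalars R)
        map_add' := fun ψ χ => by funext j; ext q; rfl
        map_smul' := fun a ψ => by
          funext j; ext q
          show ψ (a.unop • gf j q) = ψ (gf j (a.unop • q))
          rw [(gf j).map_smul] }
    have finj : Function.Injective F := by
      intro ψ χ h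
      have h' : ∀ j q, ψ (gf j q) = χ (gf j q) := fun j q =>
        congrArg (fun t => t q) (congrFun h j)
      ext m
      obtain ⟨φ, rfl⟩ := hp m
      rw [hpapp, map_sum, map_sum]
      exact Finset.sum_congr rfl fun j _ => h' j (φ j)
    let rr : (Fin n → (Q →ₗ[R] R)) →+ (M →ₗ[R] R) :=
      { toFun := fun φ =>
          { toFun := fun m => ∑ j, φ j (sec m j)
            map_add' := fun m m' => by
              rw [← Finset.sum_add_distrib]
              refine Finset.sum_congr rfl fun j _ => ?_
              rw [map_add sec, Pi.add_apply, map_add]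
            map_smul' := fun c m => by
              show ∑ j, (φ j) (sec (c • m) j) = c • ∑ j, (φ j) (sec m j)
              rw [Finset.smul_sum]
              refine Finset.sum_congr rfl fun j _ => ?_
              rw [map_smul sec, Pi.smul_apply]
              exact map_smul (φ j) c _ }
        map_zero' := by
          ext m
          show ∑ j, ((0 : Fin n → Q →ₗ[R] R) j) (sec m j) = 0
          simp
        map_add' := fun φ φ' => by
          ext m
          show ∑ j, (φ j + φ' j) (sec m j) =
            (∑ j, (φ j) (sec m j)) + ∑ j, (φ' j) (sec m j)
          rw [← Finset.sum_add_distrib]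
          exact Finset.sum_congr rfl fun j _ => rfl }
    have hr1 : ∀ (c : R) (x : Fin n → (Q →ₗ[R] R)),
        rr (algebraMap R Aᵐᵒᵖ c • x) = algebraMap R Aᵐᵒᵖ c • rr x := by
      intro c φ
      ext m
      show ∑ j, (φ j) (algebraMap R A c • sec m j) = ∑ j, (φ j) (sec (algebraMap R A c • m) j)
      refine Finset.sum_congr rfl fun j _ => congrArg (φ j) ?_
      rw [algebraMap_smul, algebraMap_smul, map_smul sec]
      rfl
    have hr2 : ∀ ψ : M →ₗ[R] R, rr (F ψ) = ψ := by
      intro ψ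
      ext m
      show ∑ j, ψ (gf j (sec m j)) = ψ m
      rw [← map_sum, ← hpapp, hsec' m]
    refine ⟨ModuleCat.of Aᵐᵒᵖ (Fin n → (Q →ₗ[R] R)),
      ⟨n, LinearMap.id, LinearMap.id, fun x => rfl⟩, F, ⟨finj, rr, hr1, hr2⟩, ?_, trivial⟩
    -- the approximation property
    intro g
    have hg : Stmt3Aux.hat R A Q M g ∈ Submodule.span R (Set.range gf) := by
      rw [hgf]; exact Submodule.mem_top
    obtain ⟨c, hc⟩ := (Submodule.mem_span_range_iff_exists_fun R).mp hg
    refine ⟨{ toFun := fun φ => ∑ j, c j • φ j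
              map_add' := fun φ φ' => by
                rw [← Finset.sum_add_distrib]
                exact Finset.sum_congr rfl fun j _ => smul_add (c j) (φ j) (φ' j)
              map_smul' := fun a φ => by
                rw [RingHom.id_apply, Finset.smul_sum]
                show (∑ j, c j • (a • φ) j) = ∑ j, a • (c j • φ j)
                exact Finset.sum_congr rfl fun j _ =>
                  (LinearMap.ext fun q => rfl :
                    c j • ((a • φ) j) = a • (c j • φ j)) }, ?_⟩
    intro ψ0
    let ψ : M →ₗ[R] R := ψ0
    ext q
    show (∑ j, c j • (F ψ) j) q = g ψ q
    calc (∑ j, c j • (F ψ) j) q = ∑ j, (c j • (F ψ) j) q := by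
          rw [LinearMap.sum_apply]
      _ = ∑ j, ψ ((c j • gf j) q) :=
          Finset.sum_congr rfl fun j _ => (map_smul ψ (c j) (gf j q)).symm
      _ = ψ ((∑ j, c j • gf j) q) := by rw [LinearMap.sum_apply, map_sum]
      _ = ψ (Stmt3Aux.hat R A Q M g q) := by rw [hc]
      _ = g ψ q := Stmt3Aux.hat_spec R A Q M g q ψ
  · -- Backward direction
    intro hd
    obtain ⟨T, ⟨k, iT, pT, hpi⟩, f, ⟨-, r, hr1, hr2⟩, -, -⟩ := hd
    intro m
    let rD : (Fin k → (Q →ₗ[R] R)) → (M →ₗ[R] R) := fun φ => r (pT φ)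
    have rD_add : ∀ φ χ, rD (φ + χ) = rD φ + rD χ := fun φ χ => by
      show r (pT (φ + χ)) = _
      rw [map_add, map_add]
    let Φ : (Fin k → (Q →ₗ[R] R)) →ₗ[R] R :=
      { toFun := fun φ => (rD φ) m
        map_add' := fun φ χ => by
          show rD (φ + χ) m = rD φ m + rD χ m
          rw [rD_add]
          rfl
        map_smul' := fun c φ => by
          rw [RingHom.id_apply]
          have h1 : c • φ = algebraMap R Aᵐᵒᵖ c • φ := by
            funext j
            exact (Stmt3Aux.algOp_smul_dual R A Q c (φ j)).symm
          have h2 : rD (algebraMap R Aᵐᵒᵖ c • φ) = c • rD φ := by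
            show r (pT (algebraMap R Aᵐᵒᵖ c • φ)) = c • rD φ
            rw [map_smul, hr1]
            exact Stmt3Aux.algOp_smul_dual R A M c (rD φ)
          show rD (c • φ) m = c • rD φ m
          rw [h1, h2]
          rfl }
    have hΦF : ∀ ψ : M →ₗ[R] R, Φ (iT (f ψ)) = ψ m := by
      intro ψ
      show rD (iT (f ψ)) m = ψ m
      have h3 : rD (iT (f ψ)) = ψ := by
        show r (pT (iT (f ψ))) = ψ
        rw [hpi]
        exact hr2 ψ
      rw [h3]
    let qq : Fin k → Q := fun j =>
      (Module.evalEquiv R Q).symm (Φ ∘ₗ LinearMap.single R (fun _ => (Q →ₗ[R] R)) j)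
    have hqq : ∀ (j : Fin k) (χ : Q →ₗ[R] R), χ (qq j) = Φ (Pi.single j χ) := by
      intro j χ
      show χ ((Module.evalEquiv R Q).symm
        (Φ ∘ₗ LinearMap.single R (fun _ => (Q →ₗ[R] R)) j)) = Φ (Pi.single j χ)
      rw [Module.apply_evalEquiv_symm_apply]
      rfl
    let gj : Fin k → (Q →ₗ[A] M) := fun j =>
      Stmt3Aux.hat R A Q M ((LinearMap.proj j : (Fin k → (Q →ₗ[R] R)) →ₗ[Aᵐᵒᵖ] _) ∘ₗ
        (iT.comp f))
    have hxm : ∑ j, gj j (qq j) = m := by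
      apply Stmt3Aux.dual_inj R M
      intro ψ
      rw [map_sum]
      calc ∑ j, ψ (gj j (qq j)) = ∑ j, Φ (Pi.single j (iT (f ψ) j)) := by
            refine Finset.sum_congr rfl fun j _ => ?_
            exact (Stmt3Aux.hat_spec R A Q M _ (qq j) ψ).trans (hqq j _)
        _ = Φ (∑ j, Pi.single j (iT (f ψ) j)) := by rw [map_sum]
        _ = Φ (iT (f ψ)) := by rw [Finset.univ_sum_single]
        _ = ψ m := hΦF ψ
    refine ⟨Submodule.Quotient.mk (∑ j, qq j ⊗ₜ[R] gj j), ?_⟩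
    rw [Stmt3Aux.counit_mk, map_sum]
    simp only [Stmt3Aux.counitAux_tmul]
    exact hxm


end Stmt3
end

section
/- Let R be a commutative Noetherian ring, A a projective Noetherian R-algebra, Q a finitely generated A-module projective over R with DQ ⊗_A Q projective over R. For a finite family of finitely generated A-modules M_i (i in a finite index set I), each projective over R, the relative dominant dimension of the direct sum equals the infimum: Q-domdim_{(A,R)}(⊕_{i∈I} M_i) = inf { Q-domdim_{(A,R)} M_i : i ∈ I }. -/
universe u
open Function TensorProduct

open RelDom Function TensorProduct

/-!
Closure of `DomdimGE n` under finite products is immediate: the product of first coresolution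
steps is again one, with cokernel the product of the cokernels. The passage to a direct summand
`M₁` of `M₁ × M₂` goes by induction on `n`. If `f : M₁ × M₂ → T` is a first step, then so is
`f ∘ inl` for `M₁`, and its cokernel is a direct summand of
`coker (f ∘ inl) × coker (f ∘ inr) ≅ coker f × T`. The isomorphism comes from an endomorphism
`ε` of `T` with `ε ∘ f = f ∘ inl ∘ fst`, which exists because `Hom_A(f, Q)` is surjective and
`T ∈ add Q`; and `coker f × T` satisfies `DomdimGE n` since `T ∈ add Q` has infinite dominant
dimension.
-/

namespace RelDom

variable {R : Type u} [CommRing R] {A : Type u} [Ring A] [Algebra R A]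
variable {Q : Type u} [AddCommGroup Q] [Module A Q]

theorem InAdd.of_subsingleton (M : Type u) [AddCommGroup M] [Module A M] [Subsingleton M] :
    InAdd A Q M :=
  ⟨0, 0, 0, fun _ => Subsingleton.elim _ _⟩

theorem InAdd.prod {T₁ T₂ : Type u} [AddCommGroup T₁] [Module A T₁] [AddCommGroup T₂]
    [Module A T₂] (h₁ : InAdd A Q T₁) (h₂ : InAdd A Q T₂) : InAdd A Q (T₁ × T₂) := by
  obtain ⟨k₁, i₁, p₁, hp₁⟩ := h₁
  obtain ⟨k₂, i₂, p₂, hp₂⟩ := h₂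
  let e : (Fin (k₁ + k₂) → Q) ≃ₗ[A] (Fin k₁ → Q) × (Fin k₂ → Q) :=
    (LinearEquiv.funCongrLeft A Q finSumFinEquiv).trans
      (LinearEquiv.sumArrowLequivProdArrow _ _ A Q)
  refine ⟨k₁ + k₂, e.symm.toLinearMap ∘ₗ i₁.prodMap i₂, p₁.prodMap p₂ ∘ₗ e.toLinearMap,
    fun t => ?_⟩
  simp [hp₁, hp₂]

theorem InAdd.exists_extension {M X T : Type u} [AddCommGroup M] [Module A M]
    [AddCommGroup X] [Module A X] [AddCommGroup T] [Module A T] (hT : InAdd A Q T)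
    {f : M →ₗ[A] X} (hf : ∀ g : M →ₗ[A] Q, ∃ h : X →ₗ[A] Q, ∀ m, h (f m) = g m)
    (g : M →ₗ[A] T) : ∃ h : X →ₗ[A] T, ∀ m, h (f m) = g m := by
  obtain ⟨k, i, p, hpi⟩ := hT
  choose h hh using fun j : Fin k => hf (LinearMap.proj j ∘ₗ i ∘ₗ g)
  refine ⟨p ∘ₗ LinearMap.pi h, fun m => ?_⟩
  have : LinearMap.pi h (f m) = i (g m) := funext fun j => hh j m
  simp [this, hpi]

noncomputable def _root_.Submodule.quotientProdEquiv {M₁ M₂ : Type u} [AddCommGroup M₁]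
    [Module A M₁] [AddCommGroup M₂] [Module A M₂] (p₁ : Submodule A M₁) (p₂ : Submodule A M₂) :
    ((M₁ × M₂) ⧸ p₁.prod p₂) ≃ₗ[A] (M₁ ⧸ p₁) × (M₂ ⧸ p₂) :=
  (Submodule.quotEquivOfEq _ _ (by rw [LinearMap.ker_prodMap, p₁.ker_mkQ, p₂.ker_mkQ])).trans
    ((p₁.mkQ.prodMap p₂.mkQ).quotKerEquivOfSurjective
      (Prod.map_surjective.2 ⟨p₁.mkQ_surjective, p₂.mkQ_surjective⟩))

/-- `β (a, b) = (a + b, a - ε (a + b))` is an automorphism of `T × T` carrying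
`range (f ∘ inl) × range (f ∘ inr)` onto `range f × 0`. -/
noncomputable def quotientRangeInlInrEquiv {M₁ M₂ T : Type u} [AddCommGroup M₁] [Module A M₁]
    [AddCommGroup M₂] [Module A M₂] [AddCommGroup T] [Module A T]
    (f : M₁ × M₂ →ₗ[A] T) (ε : T →ₗ[A] T) (hε : ∀ m, ε (f m) = f (m.1, 0)) :
    ((T ⧸ LinearMap.range f) × T) ≃ₗ[A]
      (T ⧸ LinearMap.range (f ∘ₗ LinearMap.inl A M₁ M₂)) ×
        (T ⧸ LinearMap.range (f ∘ₗ LinearMap.inr A M₁ M₂)) := by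
  let fst := LinearMap.fst A T T
  let snd := LinearMap.snd A T T
  let β : (T × T) ≃ₗ[A] T × T := LinearEquiv.ofLinearMap
    ((fst + snd).prod (fst - ε ∘ₗ (fst + snd))) ((snd + ε ∘ₗ fst).prod (fst - snd - ε ∘ₗ fst))
    (by ext <;> simp [fst, snd]) (by ext <;> simp [fst, snd])
  have hβ : (β : T × T →ₗ[A] T × T) ∘ₗ
      (f ∘ₗ LinearMap.inl A M₁ M₂).prodMap (f ∘ₗ LinearMap.inr A M₁ M₂) =
      LinearMap.inl A T T ∘ₗ f := by
    ext m <;> simp [β, fst, snd, hε, ← map_add]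
  refine (LinearEquiv.prodCongr (LinearEquiv.refl A _)
      (Submodule.quotEquivOfEqBot ⊥ rfl).symm).trans
    <| (Submodule.quotientProdEquiv _ _).symm.trans
    <| (Submodule.Quotient.equiv _ _ β ?_).symm.trans (Submodule.quotientProdEquiv _ _)
  rw [← LinearMap.range_prodMap, ← LinearMap.range_comp, hβ, LinearMap.range_comp,
    Submodule.map_inl]

section DomdimGE

variable {M M' X : Type u} [AddCommGroup M] [Module A M] [AddCommGroup M'] [Module A M']
  [AddCommGroup X] [Module A X]

theorem DomdimGE.of_succ : ∀ {n : ℕ} {N : ModuleCat.{u} A},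
    DomdimGE R A Q (n + 1) N → DomdimGE R A Q n N
  | 0, _, _ => trivial
  | _ + 1, _, ⟨T, hT, f, hf, hext, hcok⟩ => ⟨T, hT, f, hf, hext, hcok.of_succ⟩

theorem DomdimGE.mono {m n : ℕ} {N : ModuleCat.{u} A} (hmn : m ≤ n)
    (h : DomdimGE R A Q n N) : DomdimGE R A Q m N := by
  induction hmn with
  | refl => exact h
  | step _ ih => exact ih h.of_succ

theorem DomdimGE.succ_of_retract {n : ℕ} (T : ModuleCat.{u} A) (hT : InAdd A Q T)
    (f : X →ₗ[A] T) (hf : RSplitMono R A f)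
    (hext : ∀ g : X →ₗ[A] Q, ∃ h : T →ₗ[A] Q, ∀ x, h (f x) = g x)
    (i : M →ₗ[A] X) (p : X →ₗ[A] M) (hpi : ∀ m, p (i m) = m)
    (hcok : DomdimGE R A Q n (ModuleCat.of A (T ⧸ LinearMap.range (f ∘ₗ i)))) :
    DomdimGE R A Q (n + 1) (ModuleCat.of A M) := by
  obtain ⟨hinj, r, hr_smul, hr⟩ := hf
  refine ⟨T, hT, f ∘ₗ i, ⟨hinj.comp (LeftInverse.injective hpi), p.toAddMonoidHom.comp r,
    fun c x => ?_, fun m => ?_⟩, fun g => ?_, hcok⟩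
  · simp [hr_smul]
  · simp [hr, hpi]
  · obtain ⟨h, hh⟩ := hext (g ∘ₗ p)
    exact ⟨h, fun m => (hh (i m)).trans (congrArg g (hpi m))⟩

theorem DomdimGE.of_linearEquiv (e : M ≃ₗ[A] M') :
    ∀ {n : ℕ}, DomdimGE R A Q n (ModuleCat.of A M) → DomdimGE R A Q n (ModuleCat.of A M')
  | 0, _ => trivial
  | _ + 1, ⟨T, hT, f, hf, hext, hcok⟩ =>
    succ_of_retract T hT f hf hext e.symm e e.apply_symm_apply
      (by rwa [LinearMap.range_comp, LinearEquiv.range, Submodule.map_top])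

theorem DomdimGE.of_inAdd (hX : InAdd A Q X) (n : ℕ) :
    DomdimGE R A Q n (ModuleCat.of A X) := by
  induction n generalizing X with
  | zero => trivial
  | succ n ih =>
    have : Subsingleton (X ⧸ LinearMap.range (LinearMap.id : X →ₗ[A] X)) := by
      rw [LinearMap.range_id]; infer_instance
    exact ⟨ModuleCat.of A X, hX, LinearMap.id,
      ⟨injective_id, AddMonoidHom.id X, fun _ _ => rfl, fun _ => rfl⟩, fun g => ⟨g, fun _ => rfl⟩,
      ih (InAdd.of_subsingleton _)⟩

theorem DomdimGE.prod {n : ℕ} (h₁ : DomdimGE R A Q n (ModuleCat.of A M))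
    (h₂ : DomdimGE R A Q n (ModuleCat.of A M')) :
    DomdimGE R A Q n (ModuleCat.of A (M × M')) := by
  induction n generalizing M M' with
  | zero => trivial
  | succ n ih =>
    obtain ⟨T₁, hT₁, f₁, ⟨inj₁, r₁, hr₁_smul, hr₁⟩, ext₁, cok₁⟩ := h₁
    obtain ⟨T₂, hT₂, f₂, ⟨inj₂, r₂, hr₂_smul, hr₂⟩, ext₂, cok₂⟩ := h₂
    refine ⟨ModuleCat.of A (T₁ × T₂), hT₁.prod hT₂, f₁.prodMap f₂,
      ⟨inj₁.prodMap inj₂, r₁.prodMap r₂, fun c x => Prod.ext (hr₁_smul c x.1) (hr₂_smul c x.2),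
        fun m => Prod.ext (hr₁ m.1) (hr₂ m.2)⟩, fun g => ?_, ?_⟩
    · obtain ⟨h₁, hh₁⟩ := ext₁ (g ∘ₗ LinearMap.inl A M M')
      obtain ⟨h₂, hh₂⟩ := ext₂ (g ∘ₗ LinearMap.inr A M M')
      refine ⟨h₁.coprod h₂, fun m => ?_⟩
      simp [hh₁, hh₂, ← map_add]
    · rw [LinearMap.range_prodMap]
      exact (ih cok₁ cok₂).of_linearEquiv (Submodule.quotientProdEquiv _ _).symm

theorem DomdimGE.pi {ι : Type u} [Finite ι] {n : ℕ} (N : ι → Type u)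
    [∀ i, AddCommGroup (N i)] [∀ i, Module A (N i)]
    (h : ∀ i, DomdimGE R A Q n (ModuleCat.of A (N i))) :
    DomdimGE R A Q n (ModuleCat.of A (∀ i, N i)) := by
  induction ι using Finite.induction_empty_option with
  | of_equiv e ih =>
    exact (ih (fun i => N (e i)) fun i => h (e i)).of_linearEquiv
      (LinearEquiv.piCongrLeft A N e)
  | h_empty => exact of_inAdd (InAdd.of_subsingleton _) n
  | h_option ih =>
    exact ((h none).prod (ih (fun i => N (some i)) fun i => h (some i))).of_linearEquiv
      (LinearEquiv.piOptionEquivProd A).symm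

theorem DomdimGE.of_prod_left {n : ℕ} (h : DomdimGE R A Q n (ModuleCat.of A (M × M'))) :
    DomdimGE R A Q n (ModuleCat.of A M) := by
  induction n generalizing M M' with
  | zero => trivial
  | succ n ih =>
    obtain ⟨T, hT, f, hf, hext, hcok⟩ := h
    obtain ⟨ε, hε⟩ :=
      hT.exists_extension hext (f ∘ₗ LinearMap.inl A M M' ∘ₗ LinearMap.fst A M M')
    refine succ_of_retract T hT f hf hext (LinearMap.inl A M M') (LinearMap.fst A M M')
      (fun _ => rfl) (ih (M' := T ⧸ LinearMap.range (f ∘ₗ LinearMap.inr A M M')) ?_)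
    exact (hcok.prod (of_inAdd hT n)).of_linearEquiv (quotientRangeInlInrEquiv f ε hε)

theorem domdimGE_pi_iff {ι : Type u} [Finite ι] {n : ℕ} (N : ι → Type u)
    [∀ i, AddCommGroup (N i)] [∀ i, Module A (N i)] :
    DomdimGE R A Q n (ModuleCat.of A (∀ i, N i)) ↔
      ∀ i, DomdimGE R A Q n (ModuleCat.of A (N i)) := by
  classical
  refine ⟨fun h i => ?_, DomdimGE.pi N⟩
  let e : (∀ j, N j) ≃ₗ[A] N i × ∀ j : {j // j ≠ i}, N j :=
    { Equiv.piSplitAt i N with map_add' := fun _ _ => rfl, map_smul' := fun _ _ => rfl }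
  exact (h.of_linearEquiv e).of_prod_left

end DomdimGE

theorem natCast_le_domdim_iff {N : ModuleCat.{u} A} {n : ℕ} :
    (n : ℕ∞) ≤ Domdim R A Q N ↔ DomdimGE R A Q n N := by
  refine ⟨fun hle => ?_, fun h => le_iSup₂_of_le n h le_rfl⟩
  cases n with
  | zero => trivial
  | succ n =>
    by_contra hn
    have : Domdim R A Q N ≤ n := iSup₂_le fun k hk =>
      Nat.cast_le.2 (Nat.lt_succ_iff.1 (lt_of_not_ge fun hnk => hn (hk.mono hnk)))
    exact absurd (hle.trans this) (by norm_cast; omega)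

end RelDom

section Stmt8

variable (R : Type u) [CommRing R] [IsNoetherianRing R]
variable (A : Type u) [Ring A] [Algebra R A] [Module.Finite R A] [Module.Projective R A]
variable (Q : Type u) [AddCommGroup Q] [Module R Q] [Module A Q]
  [IsScalarTower R A Q] [SMulCommClass A R Q] [SMulCommClass R A Q]
  [Module.Finite A Q] [Module.Projective R Q]

theorem stmt_8
    (ι : Type u) [Fintype ι] (M : ι → Type u)
    [∀ i, AddCommGroup (M i)] [∀ i, Module A (M i)] :
    Domdim R A Q (ModuleCat.of A (∀ i, M i)) =
      ⨅ i, Domdim R A Q (ModuleCat.of A (M i)) := by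
  refine ENat.eq_of_forall_natCast_le_iff fun n => ?_
  simp only [le_iInf_iff, natCast_le_domdim_iff]
  exact domdimGE_pi_iff M

end Stmt8
end

section
/- Let R be a commutative Noetherian ring, A a projective Noetherian R-algebra, Q a finitely generated A-module projective over R with DQ ⊗_A Q projective over R, and B = End_A(Q)^op. Then the functor Hom_A(Q, −) : A-mod → B-mod is fully faithful on the full subcategory of finitely generated A-modules X, projective over R, satisfying Q-codomdim_{(A,R)} X ≥ 2. -/
universe u
open Function TensorProduct

open RelDom Function TensorProduct


section Stmt12

variable (R : Type u) [CommRing R] [IsNoetherianRing R]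
variable (A : Type u) [Ring A] [Algebra R A] [Module.Finite R A] [Module.Projective R A]
variable (Q : Type u) [AddCommGroup Q] [Module R Q] [Module A Q]
  [IsScalarTower R A Q] [SMulCommClass A R Q] [SMulCommClass R A Q]
  [Module.Finite A Q] [Module.Projective R Q]


private lemma add_decomp {A : Type u} [Ring A] {Q T W : Type u}
    [AddCommGroup Q] [Module A Q] [AddCommGroup T] [Module A T]
    [AddCommGroup W] [Module A W]
    {n : ℕ} (i : T →ₗ[A] (Fin n → Q)) (p : (Fin n → Q) →ₗ[A] T)
    (hpi : ∀ t, p (i t) = t) (g : T →ₗ[A] W) (t : T) :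
    g t = ∑ j, (g ∘ₗ p ∘ₗ LinearMap.single A (fun _ => Q) j) (i t j) := by
  conv_lhs => rw [← hpi t, ← Finset.univ_sum_single (i t)]
  simp only [map_sum]
  rfl

/-- The functor `Hom_A(Q,-)` is fully faithful on the full
subcategory of finitely generated `A`-modules `X`, projective over `R`, with
`Q-codomdim_{(A,R)} X ≥ 2`: for all such `X, Y` the canonical map
`Hom_A(X,Y) → Hom_B(Hom_A(Q,X), Hom_A(Q,Y))` is bijective
(`B = End_A(Q)ᵒᵖ`; `B`-linearity of a map `φ` is expressed as additivity plus
equivariance for precomposition with all `b ∈ End_A(Q)`). -/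
theorem stmt_12
    (hQQ : Module.Projective R (TensorOver R A (Q →ₗ[R] R) Q))
    (X Y : ModuleCat.{u} A)
    [Module.Finite A X] [Module.Finite A Y]
    [Module.Projective R (RestrictScalars R A X)]
    [Module.Projective R (RestrictScalars R A Y)]
    (hX : CodomdimGE R A Q 2 X) (hY : CodomdimGE R A Q 2 Y) :
    -- faithfulness
    (∀ g : (X : Type u) →ₗ[A] Y, (∀ h : Q →ₗ[A] X, g ∘ₗ h = 0) → g = 0) ∧
    -- fullness
    (∀ φ : (Q →ₗ[A] (X : Type u)) →+ (Q →ₗ[A] (Y : Type u)),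
      (∀ (b : Q →ₗ[A] Q) (h : Q →ₗ[A] (X : Type u)), φ (h ∘ₗ b) = φ h ∘ₗ b) →
      ∃ g : (X : Type u) →ₗ[A] Y, ∀ h : Q →ₗ[A] (X : Type u), φ h = g ∘ₗ h) := by
  simp only [show (2:ℕ) = 0+1+1 from rfl, CodomdimGE] at hX
  obtain ⟨T, ⟨n, i, p, hpi⟩, f, hf, hlift, T2, ⟨m, i2, p2, hpi2⟩, f2, hf2, -, -⟩ := hX
  have hfs : Surjective f := hf.1
  have hf2s : Surjective f2 := hf2.1
  set d : T2 →ₗ[A] (T : Type u) := (LinearMap.ker f).subtype ∘ₗ f2 with hd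
  have hfd : ∀ t, f (d t) = 0 := fun t => (f2 t).2
  constructor
  · intro g hg
    ext x
    obtain ⟨t, rfl⟩ := hfs x
    have h0 : (g ∘ₗ f) t = 0 := by
      rw [add_decomp i p hpi (g ∘ₗ f) t]
      refine Finset.sum_eq_zero fun j _ => ?_
      exact LinearMap.ext_iff.1 (hg ((f ∘ₗ p) ∘ₗ LinearMap.single A (fun _ => Q) j)) (i t j)
    exact h0
  · intro φ hb
    set gt : (T : Type u) →ₗ[A] Y :=
      ∑ j, (φ ((f ∘ₗ p) ∘ₗ LinearMap.single A (fun _ => Q) j)) ∘ₗ (LinearMap.proj j ∘ₗ i)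
      with hgt
    have key : ∀ (h : Q →ₗ[A] (T : Type u)) (q : Q), gt (h q) = φ (f ∘ₗ h) q := by
      intro h q
      have h1 : gt (h q) =
          ∑ j, (φ ((f ∘ₗ p) ∘ₗ LinearMap.single A (fun _ => Q) j)) (i (h q) j) := by
        rw [hgt]
        simp [LinearMap.sum_apply]
      have h2 : ∀ j : Fin n, (φ ((f ∘ₗ p) ∘ₗ LinearMap.single A (fun _ => Q) j)) (i (h q) j)
          = φ (((f ∘ₗ p) ∘ₗ LinearMap.single A (fun _ => Q) j) ∘ₗ
              (LinearMap.proj j ∘ₗ i ∘ₗ h)) q := by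
        intro j
        rw [hb]
        rfl
      have h3 : ∑ j, ((f ∘ₗ p) ∘ₗ LinearMap.single A (fun _ => Q) j) ∘ₗ
          (LinearMap.proj j ∘ₗ i ∘ₗ h) = f ∘ₗ h := by
        ext q'
        rw [LinearMap.sum_apply]
        exact (add_decomp i p hpi f (h q')).symm
      rw [h1]
      simp only [h2]
      rw [← LinearMap.sum_apply, ← map_sum, h3]
    have hker : LinearMap.ker f ≤ LinearMap.ker gt := by
      intro x hx
      obtain ⟨t2, ht2⟩ := hf2s ⟨x, hx⟩
      have hx' : x = d t2 := congrArg Subtype.val ht2.symm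
      have h0 : (gt ∘ₗ d) t2 = 0 := by
        rw [add_decomp i2 p2 hpi2 (gt ∘ₗ d) t2]
        refine Finset.sum_eq_zero fun k _ => ?_
        have hk := key ((d ∘ₗ p2) ∘ₗ LinearMap.single A (fun _ => Q) k) (i2 t2 k)
        have hz : f ∘ₗ ((d ∘ₗ p2) ∘ₗ LinearMap.single A (fun _ => Q) k) = 0 := by
          ext q'
          exact hfd _
        rw [hz] at hk
        simpa using hk
      rw [LinearMap.mem_ker, hx']
      exact h0
    have hcongr : ∀ t t' : (T : Type u), f t = f t' → gt t = gt t' := by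
      intro t t' hTT
      have hmem : t - t' ∈ LinearMap.ker f := by
        rw [LinearMap.mem_ker, map_sub, hTT, sub_self]
      have := hker hmem
      rw [LinearMap.mem_ker, map_sub, sub_eq_zero] at this
      exact this
    have hs : ∀ x : (X : Type u), f (surjInv hfs x) = x := fun x => surjInv_eq hfs x
    refine ⟨{ toFun := fun x => gt (surjInv hfs x)
              map_add' := fun x y => by
                have := hcongr (surjInv hfs (x + y)) (surjInv hfs x + surjInv hfs y)
                  (by simp [hs])
                simpa using this
              map_smul' := fun a x => by
                have := hcongr (surjInv hfs (a • x)) (a • surjInv hfs x) (by simp [hs])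
                simpa using this }, ?_⟩
    intro h
    obtain ⟨h', hh'⟩ := hlift h
    ext q
    show φ h q = gt (surjInv hfs (h q))
    have e1 : gt (surjInv hfs (h q)) = gt (h' q) := by
      rw [← hh' q]
      exact hcongr _ _ (hs _)
    have e3 : f ∘ₗ h' = h := LinearMap.ext hh'
    rw [e1, key h', e3]


end Stmt12
end

section
/- Let R be a commutative Noetherian ring, A a projective Noetherian R-algebra, Q a finitely generated A-module projective over R with DQ ⊗_A Q projective over R, and B = End_A(Q)^op. The following are equivalent: (i) the canonical algebra map A → End_B(Q)^op, a ↦ (q ↦ aq), is an isomorphism; (ii) the restriction of Hom_A(Q, −) to add DA is fully faithful. -/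
universe u
open Function TensorProduct

open RelDom Function TensorProduct

namespace Stmt13Aux

set_option synthInstance.maxHeartbeats 1000000
set_option maxHeartbeats 2000000

variable {R : Type u} [CommRing R]
variable {A : Type u} [Ring A] [Algebra R A]
variable {Q : Type u} [AddCommGroup Q] [Module R Q] [Module A Q]
  [IsScalarTower R A Q] [SMulCommClass A R Q] [SMulCommClass R A Q]

/-- Every finitely generated projective module has a finite dual basis. -/
lemma exists_dualBasis (P : Type u) [AddCommGroup P] [Module R P]
    [Module.Finite R P] [Module.Projective R P] :
    ∃ (n : ℕ) (e : Fin n → P) (f : Fin n → (P →ₗ[R] R)),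
      ∀ x : P, ∑ i, f i x • e i = x := by
  obtain ⟨n, π, hπ⟩ := Module.Finite.exists_fin' R P
  obtain ⟨s, hs⟩ := Module.projective_lifting_property π LinearMap.id hπ
  refine ⟨n, fun i => π (Pi.single i (1 : R)), fun i => (LinearMap.proj i) ∘ₗ s, fun x => ?_⟩
  have key : (∑ i, (s x i) • (Pi.single i (1 : R) : Fin n → R)) = s x := by
    rw [← Finset.univ_sum_single (s x)]
    refine Finset.sum_congr rfl fun i _ => ?_
    funext j
    by_cases h : j = i <;> simp [Pi.single_apply, h]
  calc ∑ i, ((LinearMap.proj i ∘ₗ s) x) • π (Pi.single i 1)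
      = π (∑ i, (s x i) • (Pi.single i (1 : R) : Fin n → R)) := by
        rw [map_sum]
        exact Finset.sum_congr rfl fun i _ => (map_smul π _ _).symm
    _ = π (s x) := by rw [key]
    _ = x := DFunLike.congr_fun hs x

lemma dual_sep {P : Type u} [AddCommGroup P] [Module R P]
    [Module.Finite R P] [Module.Projective R P] (x : P)
    (hx : ∀ l : P →ₗ[R] R, l x = 0) : x = 0 := by
  obtain ⟨n, e, f, hef⟩ := exists_dualBasis (R := R) P
  rw [← hef x]
  simp [hx]

lemma dual_eq {P : Type u} [AddCommGroup P] [Module R P]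
    [Module.Finite R P] [Module.Projective R P] (u v : P)
    (h : ∀ l : P →ₗ[R] R, l u = l v) : u = v := by
  have := dual_sep (R := R) (u - v) (fun l => by rw [map_sub, h, sub_self])
  exact sub_eq_zero.mp this

/-- The evaluation identity for `A`-linear maps into the coinduced module. -/
lemma evalA {M : Type u} [AddCommGroup M] [Module A M]
    (F : M →ₗ[A] (A →ₗ[R] R)) (q : M) (x : A) :
    F q x = F (x • q) 1 := by
  rw [map_smul, coind_smul_apply R A, one_mul]

/-- `Hom_A(Q, DA) → DQ`. -/
def toDualQ (h : Q →ₗ[A] (A →ₗ[R] R)) : Q →ₗ[R] R where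
  toFun q := h q 1
  map_add' q q' := by
    show h (q + q') 1 = h q 1 + h q' 1
    rw [map_add]
    rfl
  map_smul' r q := by
    show h (r • q) 1 = r • h q 1
    rw [← algebraMap_smul A r q, map_smul, coind_smul_apply R A, one_mul,
      Algebra.algebraMap_eq_smul_one, map_smul]

@[simp] lemma toDualQ_apply (h : Q →ₗ[A] (A →ₗ[R] R)) (q : Q) :
    toDualQ h q = h q 1 := rfl

/-- `DQ → Hom_A(Q, DA)`. -/
def ofDualQ (l : Q →ₗ[R] R) : Q →ₗ[A] (A →ₗ[R] R) where
  toFun q :=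
    { toFun := fun x => l (x • q)
      map_add' := fun x y => by
        show l ((x + y) • q) = l (x • q) + l (y • q)
        rw [add_smul, map_add]
      map_smul' := fun r x => by
        show l ((r • x) • q) = r • l (x • q)
        rw [smul_assoc, map_smul] }
  map_add' q q' := by
    ext x
    show l (x • (q + q')) = l (x • q) + l (x • q')
    rw [smul_add, map_add]
  map_smul' a q := by
    ext x
    show l (x • a • q) = l ((x * a) • q)
    rw [mul_smul]

@[simp] lemma ofDualQ_apply (l : Q →ₗ[R] R) (q : Q) (x : A) :
    ofDualQ (A := A) l q x = l (x • q) := rfl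

lemma toDualQ_ofDualQ (l : Q →ₗ[R] R) : toDualQ (ofDualQ (A := A) l) = l := by
  ext q
  show l ((1 : A) • q) = l q
  rw [one_smul]

lemma ofDualQ_toDualQ (h : Q →ₗ[A] (A →ₗ[R] R)) : ofDualQ (toDualQ h) = h := by
  ext q x
  show h (x • q) 1 = h q x
  rw [← evalA]

lemma ofDualQ_add (l l' : Q →ₗ[R] R) :
    ofDualQ (A := A) (l + l') = ofDualQ l + ofDualQ l' := by
  ext q x
  rfl

/-- Scaling by `r : R` as an `A`-linear endomorphism of `Q`. -/
def bR (r : R) : Q →ₗ[A] Q where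
  toFun q := r • q
  map_add' := smul_add r
  map_smul' a q := by
    show r • (a • q) = a • (r • q)
    exact (smul_comm a r q).symm

@[simp] lemma bR_apply (r : R) (q : Q) : bR (A := A) r q = r • q := rfl

lemma ofDualQ_smul (r : R) (l : Q →ₗ[R] R) :
    ofDualQ (A := A) (r • l) = ofDualQ l ∘ₗ bR r := by
  ext q x
  show r • l (x • q) = l (x • r • q)
  rw [smul_comm x r q]
  exact (map_smul l r (x • q)).symm

/-- Precomposition of a functional with `b : Q →ₗ[A] Q`. -/
def compB (b : Q →ₗ[A] Q) (l : Q →ₗ[R] R) : Q →ₗ[R] R where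
  toFun q := l (b q)
  map_add' q q' := by
    show l (b (q + q')) = l (b q) + l (b q')
    rw [map_add, map_add]
  map_smul' r q := by
    show l (b (r • q)) = r • l (b q)
    rw [← algebraMap_smul A r q, map_smul b, algebraMap_smul]
    exact map_smul l r (b q)

@[simp] lemma compB_apply (b : Q →ₗ[A] Q) (l : Q →ₗ[R] R) (q : Q) :
    compB b l q = l (b q) := rfl

lemma ofDualQ_compB (b : Q →ₗ[A] Q) (l : Q →ₗ[R] R) :
    ofDualQ (compB b l) = ofDualQ l ∘ₗ b := by
  ext q x
  show l (b (x • q)) = l (x • b q)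
  rw [map_smul]

lemma toDualQ_comp_bR (G : Q →ₗ[A] (A →ₗ[R] R)) (r : R) :
    toDualQ (G ∘ₗ bR r) = r • toDualQ G := by
  ext q
  show G (r • q) 1 = r • G q 1
  exact (toDualQ G).map_smul r q

lemma toDualQ_add (F F' : Q →ₗ[A] (A →ₗ[R] R)) :
    toDualQ (F + F') = toDualQ F + toDualQ F' := by
  ext q
  rfl

/-- Left multiplication by `a` dualized: `f ↦ (x ↦ f (a * x))`, `A`-linearly. -/
def lmulDual (a : A) : (A →ₗ[R] R) →ₗ[A] (A →ₗ[R] R) where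
  toFun f := f ∘ₗ LinearMap.mulLeft R a
  map_add' f g := rfl
  map_smul' b f := by
    ext x
    show f (a * x * b) = f (a * (x * b))
    rw [mul_assoc]

@[simp] lemma lmulDual_apply (a : A) (f : A →ₗ[R] R) (x : A) :
    lmulDual (R := R) a f x = f (a * x) := rfl

variable [Module.Finite R A] [Module.Projective R A]

/-- Fullness of duality on `End_A(DA)`. -/
lemma lmul_full (g : (A →ₗ[R] R) →ₗ[A] (A →ₗ[R] R)) :
    ∃ a : A, ∀ (f : A →ₗ[R] R) (x : A), g f x = f (a * x) := by
  obtain ⟨n, e, f, hef⟩ := exists_dualBasis (R := R) A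
  -- g commutes with the pointwise R-action
  have hsm : ∀ (r : R) (μ : A →ₗ[R] R), g (r • μ) = r • g μ := by
    intro r μ
    have h1 : (algebraMap R A r) • μ = r • μ := by
      ext x
      rw [coind_smul_apply R A]
      show μ (x * algebraMap R A r) = r • μ x
      rw [← Algebra.commutes r x, ← Algebra.smul_def, map_smul]
    have h2 : (algebraMap R A r) • g μ = r • g μ := by
      ext x
      rw [coind_smul_apply R A]
      show g μ (x * algebraMap R A r) = r • g μ x
      rw [← Algebra.commutes r x, ← Algebra.smul_def, map_smul]
    rw [← h1, map_smul, h2]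
  set L : A → A := fun x => ∑ i, g (f i) x • e i with hL
  have hgl : ∀ (μ : A →ₗ[R] R) (x : A), g μ x = μ (L x) := by
    intro μ x
    have hμ : (∑ i, μ (e i) • f i) = μ := by
      ext y
      rw [LinearMap.sum_apply]
      simp only [LinearMap.smul_apply, smul_eq_mul]
      calc ∑ i, μ (e i) * f i y = μ (∑ i, f i y • e i) := by
            rw [map_sum]
            exact Finset.sum_congr rfl fun i _ => by rw [map_smul, smul_eq_mul, mul_comm]
        _ = μ y := by rw [hef]
    calc g μ x = g (∑ i, μ (e i) • f i) x := by rw [hμ]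
      _ = ∑ i, μ (e i) * g (f i) x := by
          rw [map_sum]
          · rw [LinearMap.sum_apply]
            exact Finset.sum_congr rfl fun i _ => by rw [hsm, LinearMap.smul_apply, smul_eq_mul]
      _ = μ (L x) := by
          rw [hL]
          simp only [map_sum, map_smul, smul_eq_mul]
          exact Finset.sum_congr rfl fun i _ => by rw [mul_comm]
  have hright : ∀ (x b : A), L (x * b) = L x * b := by
    intro x b
    refine dual_eq (R := R) _ _ fun ν => ?_
    have h1 : ν (L (x * b)) = g ν (x * b) := (hgl ν (x * b)).symm
    have h2 : g ν (x * b) = (b • g ν) x := rfl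
    have h3 : (b • g ν) x = g (b • ν) x := by rw [← map_smul]
    have h4 : g (b • ν) x = (b • ν) (L x) := hgl _ _
    have h5 : (b • ν) (L x) = ν (L x * b) := rfl
    rw [h1, h2, h3, h4, h5]
  refine ⟨L 1, fun μ x => ?_⟩
  rw [hgl μ x]
  have : L x = L 1 * x := by
    have := hright 1 x
    rwa [one_mul] at this
  rw [this]

variable [Module.Finite R Q] [Module.Projective R Q]

/-- Fullness of duality on `R`-linear endomorphisms of `DQ`. -/
lemma dq_full (ψ : (Q →ₗ[R] R) →ₗ[R] (Q →ₗ[R] R)) :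
    ∃ φ : Q →ₗ[R] Q, ∀ (l : Q →ₗ[R] R) (q : Q), ψ l q = l (φ q) := by
  obtain ⟨n, e, f, hef⟩ := exists_dualBasis (R := R) Q
  refine ⟨{ toFun := fun q => ∑ i, ψ (f i) q • e i
            map_add' := fun q q' => by
              simp only [map_add, LinearMap.add_apply, add_smul, Finset.sum_add_distrib]
            map_smul' := fun r q => by
              simp only [RingHom.id_apply, map_smul, LinearMap.smul_apply, smul_eq_mul,
                mul_smul, Finset.smul_sum] }, fun l q => ?_⟩
  have hl : (∑ i, l (e i) • f i) = l := by
    ext y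
    rw [LinearMap.sum_apply]
    simp only [LinearMap.smul_apply, smul_eq_mul]
    calc ∑ i, l (e i) * f i y = l (∑ i, f i y • e i) := by
          rw [map_sum]
          exact Finset.sum_congr rfl fun i _ => by rw [map_smul, smul_eq_mul, mul_comm]
      _ = l y := by rw [hef]
  calc ψ l q = ψ (∑ i, l (e i) • f i) q := by rw [hl]
    _ = ∑ i, l (e i) * ψ (f i) q := by
        rw [map_sum, LinearMap.sum_apply]
        exact Finset.sum_congr rfl fun i _ => by
          rw [map_smul, LinearMap.smul_apply, smul_eq_mul]
    _ = l (∑ i, ψ (f i) q • e i) := by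
        rw [map_sum]
        exact Finset.sum_congr rfl fun i _ => by rw [map_smul, smul_eq_mul, mul_comm]
    _ = l _ := rfl

section Components

variable {X Y : Type u} [AddCommGroup X] [Module A X] [AddCommGroup Y] [Module A Y]

lemma component_zero (h1 : ∀ a : A, (∀ q : Q, a • q = 0) → a = 0)
    (g : (A →ₗ[R] R) →ₗ[A] (A →ₗ[R] R))
    (hg : ∀ l : Q →ₗ[R] R, g ∘ₗ ofDualQ l = 0) : g = 0 := by
  obtain ⟨a, ha⟩ := lmul_full g
  have ha0 : a = 0 := by
    refine h1 a (fun q => dual_sep (R := R) _ fun l => ?_)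
    calc l (a • q) = l ((a * 1) • q) := by rw [mul_one]
      _ = (ofDualQ l q) (a * 1) := rfl
      _ = g (ofDualQ l q) 1 := (ha (ofDualQ l q) 1).symm
      _ = (g ∘ₗ ofDualQ l) q 1 := rfl
      _ = 0 := by rw [hg l]; rfl
  ext f x
  rw [ha f x, ha0, zero_mul, map_zero]
  rfl

lemma component_exists
    (h2 : ∀ φ : Q →+ Q, (∀ (b : Q →ₗ[A] Q) (q : Q), φ (b q) = b (φ q)) →
        ∃ a : A, ∀ q : Q, φ q = a • q)
    (φ : (Q →ₗ[A] X) →+ (Q →ₗ[A] Y))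
    (hφ : ∀ (b : Q →ₗ[A] Q) (h : Q →ₗ[A] X), φ (h ∘ₗ b) = φ h ∘ₗ b)
    (u : (A →ₗ[R] R) →ₗ[A] X) (v : Y →ₗ[A] (A →ₗ[R] R)) :
    ∃ a : A, ∀ (l : Q →ₗ[R] R) (q : Q),
      toDualQ (v ∘ₗ φ (u ∘ₗ ofDualQ l)) q = l (a • q) := by
  let ψ : (Q →ₗ[R] R) →ₗ[R] (Q →ₗ[R] R) :=
    { toFun := fun l => toDualQ (v ∘ₗ φ (u ∘ₗ ofDualQ l))
      map_add' := fun l l' => by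
        have h0 : u ∘ₗ ofDualQ (l + l') = u ∘ₗ ofDualQ l + u ∘ₗ ofDualQ l' := by
          rw [ofDualQ_add, LinearMap.comp_add]
        show toDualQ (v ∘ₗ φ (u ∘ₗ ofDualQ (l + l'))) =
          toDualQ (v ∘ₗ φ (u ∘ₗ ofDualQ l)) + toDualQ (v ∘ₗ φ (u ∘ₗ ofDualQ l'))
        rw [h0, map_add, LinearMap.comp_add, toDualQ_add]
      map_smul' := fun r l => by
        have h1' : u ∘ₗ ofDualQ (r • l) = (u ∘ₗ ofDualQ l) ∘ₗ bR r := by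
          rw [ofDualQ_smul, ← LinearMap.comp_assoc]
        show toDualQ (v ∘ₗ φ (u ∘ₗ ofDualQ (r • l))) =
          r • toDualQ (v ∘ₗ φ (u ∘ₗ ofDualQ l))
        rw [h1', hφ, ← LinearMap.comp_assoc, toDualQ_comp_bR] }
  obtain ⟨p, hp⟩ := dq_full ψ
  have hcommp : ∀ (b : Q →ₗ[A] Q) (q : Q), p (b q) = b (p q) := by
    intro b q
    refine dual_eq (R := R) _ _ fun ν => ?_
    have e1 : ν (p (b q)) = ψ ν (b q) := (hp ν (b q)).symm
    have e2 : compB b ν (p q) = ψ (compB b ν) q := (hp (compB b ν) q).symm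
    have e3 : ψ (compB b ν) q = ψ ν (b q) := by
      have h0 : u ∘ₗ ofDualQ (compB b ν) = (u ∘ₗ ofDualQ ν) ∘ₗ b := by
        rw [ofDualQ_compB, ← LinearMap.comp_assoc]
      calc ψ (compB b ν) q = toDualQ (v ∘ₗ φ (u ∘ₗ ofDualQ (compB b ν))) q := rfl
        _ = toDualQ (v ∘ₗ (φ (u ∘ₗ ofDualQ ν) ∘ₗ b)) q := by rw [h0, hφ]
        _ = toDualQ ((v ∘ₗ φ (u ∘ₗ ofDualQ ν)) ∘ₗ b) q := by rw [← LinearMap.comp_assoc]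
        _ = ψ ν (b q) := rfl
    rw [e1, ← e3, ← e2]
    rfl
  obtain ⟨a, hA⟩ := h2 p.toAddMonoidHom (fun b q => hcommp b q)
  exact ⟨a, fun l q => (hp l q).trans (congrArg l (hA q))⟩

end Components

lemma exists_scalar
    (φ : Q →+ Q) (hcomm : ∀ (b : Q →ₗ[A] Q) (q : Q), φ (b q) = b (φ q))
    (hfull : ∀ Ψ : (Q →ₗ[A] (A →ₗ[R] R)) →+ (Q →ₗ[A] (A →ₗ[R] R)),
        (∀ (b : Q →ₗ[A] Q) (h : Q →ₗ[A] (A →ₗ[R] R)), Ψ (h ∘ₗ b) = Ψ h ∘ₗ b) →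
        ∃ g : (A →ₗ[R] R) →ₗ[A] (A →ₗ[R] R),
          ∀ h : Q →ₗ[A] (A →ₗ[R] R), Ψ h = g ∘ₗ h) :
    ∃ a : A, ∀ q : Q, φ q = a • q := by
  have hφR : ∀ (r : R) (q : Q), φ (r • q) = r • φ q := fun r q => hcomm (bR r) q
  let lmap : (Q →ₗ[A] (A →ₗ[R] R)) → (Q →ₗ[R] R) := fun h =>
    { toFun := fun q => toDualQ h (φ q)
      map_add' := fun q q' => by
        show toDualQ h (φ (q + q')) = toDualQ h (φ q) + toDualQ h (φ q')
        rw [map_add, map_add]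
      map_smul' := fun r q => by
        show toDualQ h (φ (r • q)) = r • toDualQ h (φ q)
        rw [hφR, map_smul] }
  have lmap_apply : ∀ (h : Q →ₗ[A] (A →ₗ[R] R)) (q : Q), lmap h q = h (φ q) 1 :=
    fun h q => rfl
  let Ψ : (Q →ₗ[A] (A →ₗ[R] R)) →+ (Q →ₗ[A] (A →ₗ[R] R)) :=
    { toFun := fun h => ofDualQ (lmap h)
      map_zero' := by
        ext q x
        show lmap 0 (x • q) = 0
        rw [lmap_apply]
        rfl
      map_add' := fun h h' => by
        ext q x
        show lmap (h + h') (x • q) = lmap h (x • q) + lmap h' (x • q)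
        rw [lmap_apply, lmap_apply, lmap_apply]
        rfl }
  have Ψ_apply : ∀ (h : Q →ₗ[A] (A →ₗ[R] R)) (q : Q) (x : A),
      Ψ h q x = h (φ (x • q)) 1 := fun h q x => rfl
  have hB : ∀ (b : Q →ₗ[A] Q) (h : Q →ₗ[A] (A →ₗ[R] R)), Ψ (h ∘ₗ b) = Ψ h ∘ₗ b := by
    intro b h
    ext q x
    rw [LinearMap.comp_apply, Ψ_apply, Ψ_apply, LinearMap.comp_apply,
      ← hcomm b (x • q), map_smul]
  obtain ⟨g, hg⟩ := hfull Ψ hB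
  obtain ⟨a, hga⟩ := lmul_full g
  refine ⟨a, fun q => dual_eq (R := R) _ _ fun ν => ?_⟩
  have e1 := DFunLike.congr_fun (DFunLike.congr_fun (hg (ofDualQ ν)) q) (1 : A)
  calc ν (φ q) = ν ((1 : A) • φ ((1 : A) • q)) := by rw [one_smul, one_smul]
    _ = (Ψ (ofDualQ ν)) q 1 := rfl
    _ = ((g ∘ₗ ofDualQ ν) q) 1 := e1
    _ = (ofDualQ ν q) (a * 1) := by rw [LinearMap.comp_apply, hga]
    _ = ν (a • q) := by rw [ofDualQ_apply, mul_one]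

end Stmt13Aux

open Stmt13Aux

section Stmt13

variable (R : Type u) [CommRing R] [IsNoetherianRing R]
variable (A : Type u) [Ring A] [Algebra R A] [Module.Finite R A] [Module.Projective R A]
variable (Q : Type u) [AddCommGroup Q] [Module R Q] [Module A Q]
  [IsScalarTower R A Q] [SMulCommClass A R Q] [SMulCommClass R A Q]
  [Module.Finite A Q] [Module.Projective R Q]
variable (M : Type u) [AddCommGroup M] [Module R M] [Module A M]
  [IsScalarTower R A M] [SMulCommClass A R M] [SMulCommClass R A M]
  [Module.Finite A M] [Module.Projective R M]

/-- TFAE: (i) the canonical algebra map `A → End_B(Q)ᵒᵖ`,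
`a ↦ (q ↦ a • q)`, is an isomorphism (`B = End_A(Q)ᵒᵖ`, so `B`-linear endomorphisms
of `Q` are the additive endomorphisms commuting with every `A`-linear endomorphism
of `Q`); (ii) the restriction of `Hom_A(Q, -)` to `add DA` is fully faithful. -/
theorem stmt_13
    (hQQ : Module.Projective R (TensorOver R A (Q →ₗ[R] R) Q)) :
    ((∀ a : A, (∀ q : Q, a • q = 0) → a = 0) ∧
      (∀ φ : Q →+ Q, (∀ (b : Q →ₗ[A] Q) (q : Q), φ (b q) = b (φ q)) →
        ∃ a : A, ∀ q : Q, φ q = a • q)) ↔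
    (∀ (X Y : Type u) [AddCommGroup X] [Module A X] [AddCommGroup Y] [Module A Y],
      InAdd A (A →ₗ[R] R) X → InAdd A (A →ₗ[R] R) Y →
      ((∀ g : X →ₗ[A] Y, (∀ h : Q →ₗ[A] X, g ∘ₗ h = 0) → g = 0) ∧
        (∀ φ : (Q →ₗ[A] X) →+ (Q →ₗ[A] Y),
          (∀ (b : Q →ₗ[A] Q) (h : Q →ₗ[A] X), φ (h ∘ₗ b) = φ h ∘ₗ b) →
          ∃ g : X →ₗ[A] Y, ∀ h : Q →ₗ[A] X, φ h = g ∘ₗ h))) := by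
  classical
  haveI : Module.Finite R Q := Module.Finite.trans A Q
  constructor
  · rintro ⟨h1, h2⟩ X Y _ _ _ _ hX hY
    obtain ⟨n, iX, pX, hpiX⟩ := hX
    obtain ⟨m, iY, pY, hpiY⟩ := hY
    constructor
    · -- faithfulness
      intro g hg
      have comp0 : ∀ (j : Fin m) (i : Fin n),
          ((LinearMap.proj j) ∘ₗ iY ∘ₗ g ∘ₗ pX ∘ₗ
            (LinearMap.single A (fun _ : Fin n => (A →ₗ[R] R)) i)
            : (A →ₗ[R] R) →ₗ[A] (A →ₗ[R] R)) = 0 := by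
        intro j i
        refine component_zero h1 _ (fun l => ?_)
        have h0 := hg (pX ∘ₗ (LinearMap.single A (fun _ : Fin n => (A →ₗ[R] R)) i) ∘ₗ ofDualQ l)
        ext q x
        have h0q := DFunLike.congr_fun h0 q
        simp only [LinearMap.comp_apply, LinearMap.zero_apply] at h0q ⊢
        rw [h0q]
        simp
      ext x
      have hxdec : g x = ∑ i, g (pX (Pi.single i ((iX x) i))) := by
        have e0 : iX x = ∑ i, Pi.single i ((iX x) i) := (Finset.univ_sum_single (iX x)).symm
        conv_lhs => rw [← hpiX x, e0]
        rw [map_sum, map_sum]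
      rw [LinearMap.zero_apply, hxdec]
      refine Finset.sum_eq_zero fun i _ => ?_
      have h0 : iY (g (pX (Pi.single i ((iX x) i)))) = 0 := by
        funext j
        have hji := DFunLike.congr_fun (comp0 j i) ((iX x) i)
        simp only [LinearMap.comp_apply, LinearMap.zero_apply] at hji
        simpa using hji
      calc g (pX (Pi.single i ((iX x) i)))
          = pY (iY (g (pX (Pi.single i ((iX x) i))))) := (hpiY _).symm
        _ = 0 := by rw [h0, map_zero]
    · -- fullness
      intro φ hφ
      have key : ∀ (j : Fin m) (i : Fin n), ∃ a : A, ∀ (l : Q →ₗ[R] R) (q : Q),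
          toDualQ (((LinearMap.proj j) ∘ₗ iY) ∘ₗ
            φ ((pX ∘ₗ LinearMap.single A (fun _ : Fin n => (A →ₗ[R] R)) i) ∘ₗ ofDualQ l)) q
            = l (a • q) :=
        fun j i => component_exists h2 φ hφ
          (pX ∘ₗ LinearMap.single A (fun _ : Fin n => (A →ₗ[R] R)) i)
          ((LinearMap.proj j) ∘ₗ iY)
      choose a ha using key
      set G : (Fin n → (A →ₗ[R] R)) →ₗ[A] (Fin m → (A →ₗ[R] R)) :=
        LinearMap.pi (fun j => ∑ i, (lmulDual (a j i)) ∘ₗ (LinearMap.proj i)) with hGdef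
      refine ⟨pY ∘ₗ G ∘ₗ iX, fun h => ?_⟩
      set l : Fin n → (Q →ₗ[R] R) := fun i => toDualQ ((LinearMap.proj i) ∘ₗ iX ∘ₗ h) with hldef
      have hofl : ∀ i, ofDualQ (l i) = (LinearMap.proj i) ∘ₗ iX ∘ₗ h :=
        fun i => ofDualQ_toDualQ _
      have hoflq : ∀ i q, ofDualQ (l i) q = (iX (h q)) i := by
        intro i q
        rw [hofl i]
        rfl
      have hdec : h = ∑ i,
          (pX ∘ₗ LinearMap.single A (fun _ : Fin n => (A →ₗ[R] R)) i) ∘ₗ ofDualQ (l i) := by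
        ext q
        rw [LinearMap.sum_apply]
        have e1 : ∀ i, ((pX ∘ₗ LinearMap.single A (fun _ : Fin n => (A →ₗ[R] R)) i)
            ∘ₗ ofDualQ (l i)) q = pX (Pi.single i ((iX (h q)) i)) := by
          intro i
          simp only [LinearMap.comp_apply, hoflq]
          rfl
        rw [Finset.sum_congr rfl (fun i _ => e1 i)]
        calc h q = pX (iX (h q)) := (hpiX _).symm
          _ = pX (∑ i, Pi.single i ((iX (h q)) i)) := by rw [Finset.univ_sum_single]
          _ = ∑ i, pX (Pi.single i ((iX (h q)) i)) := map_sum pX _ _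
      have hφh : φ h = ∑ i,
          φ ((pX ∘ₗ LinearMap.single A (fun _ : Fin n => (A →ₗ[R] R)) i) ∘ₗ ofDualQ (l i)) := by
        rw [hdec]
        exact map_sum φ _ _
      ext q
      have main : iY (φ h q) = G (iX (h q)) := by
        funext j
        ext x
        have lhs : (iY (φ h q)) j x = ∑ i, l i (a j i • (x • q)) := by
          rw [hφh]
          rw [LinearMap.sum_apply, map_sum]
          rw [Finset.sum_apply]
          rw [LinearMap.sum_apply]
          refine Finset.sum_congr rfl fun i _ => ?_
          have e2 : (iY (φ ((pX ∘ₗ LinearMap.single A (fun _ : Fin n => (A →ₗ[R] R)) i)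
              ∘ₗ ofDualQ (l i)) q)) j x
              = (((LinearMap.proj j) ∘ₗ iY) ∘ₗ
                  φ ((pX ∘ₗ LinearMap.single A (fun _ : Fin n => (A →ₗ[R] R)) i)
                    ∘ₗ ofDualQ (l i))) q x := rfl
          rw [e2, evalA]
          exact ha j i (l i) (x • q)
        have rhs : (G (iX (h q))) j x = ∑ i, l i (a j i • (x • q)) := by
          rw [hGdef]
          rw [LinearMap.pi_apply, LinearMap.sum_apply, LinearMap.sum_apply]
          refine Finset.sum_congr rfl fun i _ => ?_
          have e3 : (lmulDual (a j i) ∘ₗ (LinearMap.proj i)) (iX (h q)) x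
              = ((iX (h q)) i) (a j i * x) := rfl
          rw [e3, ← hoflq i q, ofDualQ_apply, mul_smul]
        rw [lhs, rhs]
      calc φ h q = pY (iY (φ h q)) := (hpiY _).symm
        _ = pY (G (iX (h q))) := by rw [main]
        _ = ((pY ∘ₗ G ∘ₗ iX) ∘ₗ h) q := rfl
  · intro hR
    have hDA : InAdd A (A →ₗ[R] R) (A →ₗ[R] R) :=
      ⟨1, LinearMap.single A (fun _ : Fin 1 => (A →ₗ[R] R)) 0, LinearMap.proj 0,
        fun f => by simp⟩
    obtain ⟨hfaith, hfull⟩ := hR (A →ₗ[R] R) (A →ₗ[R] R) hDA hDA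
    constructor
    · intro a h0
      have hz : lmulDual (R := R) (A := A) a = 0 := by
        apply hfaith
        intro h
        ext q x
        simp only [LinearMap.comp_apply, lmulDual_apply, LinearMap.zero_apply]
        rw [evalA h q (a * x), mul_smul, h0 (x • q), map_zero]
        rfl
      refine dual_sep (R := R) a (fun f => ?_)
      have hf := DFunLike.congr_fun (DFunLike.congr_fun hz f) (1 : A)
      simpa using hf
    · intro φ hcomm
      exact exists_scalar φ hcomm hfull


end Stmt13
end
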